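/- arXiv:2309.02701 — 4 statements merged into one kernel-verified Lean document; each statement's English description precedes it below -/
import Mathlib

section
/- Pseudospectrum inclusion via rank-one perturbations: Let H be a complex Hilbert space, A a bounded linear operator on H, ε > 0, and z ∈ ℂ with z not in the spectrum of A and ‖(z − A)⁻¹‖ > 1/ε. Then there exists a bounded linear operator K on H whose range has dimension at most one, with ‖K‖ < ε, such that z is an eigenvalue of A + K; in particular z lies in the spectrum of A + K. -/
/-!
If `‖(z - A)⁻¹‖ > 1/ε`, then `z - A` has an approximate eigenvector: some `v ≠ 0` with
`‖(z - A) v‖ < ε ‖v‖`. The rank-one operator `K = ‖v‖⁻² ⟪v, ·⟫ (z - A) v` maps `v` to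
`(z - A) v` and has norm `‖(z - A) v‖ / ‖v‖ < ε`, so `(A + K) v = z v`.
-/

open ContinuousLinearMap InnerProductSpace

section Spectrum

variable {R E : Type*} [CommRing R] [AddCommGroup E] [TopologicalSpace E] [Module R E]
  [IsTopologicalAddGroup E] [ContinuousConstSMul R E]

theorem ContinuousLinearMap.spectrum_toLinearMap_subset (f : E →L[R] E) :
    spectrum R (f : Module.End R E) ⊆ spectrum R f := fun μ hμ hunit ↦
  hμ <| spectrum.mem_resolventSet_iff.mpr <| by
    simpa [Algebra.algebraMap_eq_smul_one] using
      (spectrum.mem_resolventSet_iff.mp hunit).map toLinearMapRingHom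

theorem ContinuousLinearMap.mem_spectrum_of_apply_eq_smul {f : E →L[R] E} {μ : R} {v : E}
    (hv : v ≠ 0) (hfv : f v = μ • v) : μ ∈ spectrum R f :=
  f.spectrum_toLinearMap_subset <| Module.End.HasEigenvalue.mem_spectrum <|
    Module.End.hasEigenvalue_of_hasEigenvector ⟨Module.End.mem_eigenspace_iff.mpr hfv, hv⟩

end Spectrum

section RankOne

variable {𝕜 E F : Type*} [RCLike 𝕜] [SeminormedAddCommGroup E] [NormedSpace 𝕜 E]
  [NormedAddCommGroup F] [InnerProductSpace 𝕜 F]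

theorem InnerProductSpace.rank_rankOne_le_one (x : E) (y : F) :
    (rankOne 𝕜 x y : F →ₗ[𝕜] E).rank ≤ 1 := by
  by_cases h : x = 0 ∨ y = 0
  · simp [rankOne_eq_zero.mpr h]
  · push Not at h
    exact (rank_rankOne h.1 h.2).le

theorem InnerProductSpace.exists_rank_le_one_apply_eq (x : E) {v : F} (hv : v ≠ 0) :
    ∃ K : F →L[𝕜] E, (K : F →ₗ[𝕜] E).rank ≤ 1 ∧ ‖K‖ = ‖x‖ / ‖v‖ ∧ K v = x := by
  have hv_norm : ‖v‖ ≠ 0 := norm_ne_zero_iff.mpr hv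
  refine ⟨rankOne 𝕜 (((‖v‖ : 𝕜) ^ 2)⁻¹ • x) v, rank_rankOne_le_one _ _, ?_, ?_⟩
  · simp only [map_smul, smul_apply, norm_smul, norm_inv, norm_pow, norm_algebraMap', norm_norm,
      norm_rankOne]
    field_simp
  · simp [inner_self_eq_norm_sq_to_K, smul_smul, hv_norm]

end RankOne

theorem ContinuousLinearMap.exists_norm_apply_lt_of_inv_lt_norm_ringInverse {𝕜 E : Type*}
    [NontriviallyNormedField 𝕜] [SeminormedAddCommGroup E] [NormedSpace 𝕜 E] {T : E →L[𝕜] E}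
    (hT : IsUnit T) {ε : ℝ} (hε : 0 < ε) (h : 1 / ε < ‖Ring.inverse T‖) :
    ∃ v, 0 < ‖v‖ ∧ ‖T v‖ < ε * ‖v‖ := by
  obtain ⟨x, hx⟩ := (Ring.inverse T).exists_mul_lt_of_lt_opNorm (by positivity) h
  have hTx : T (Ring.inverse T x) = x := by
    simpa using DFunLike.congr_fun (Ring.mul_inverse_cancel T hT) x
  refine ⟨Ring.inverse T x, (by positivity : 0 ≤ 1 / ε * ‖x‖).trans_lt hx, ?_⟩
  calc ‖T (Ring.inverse T x)‖ = ε * (1 / ε * ‖x‖) := by rw [hTx]; field_simp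
    _ < ε * ‖Ring.inverse T x‖ := by gcongr

theorem pseudospectrum_rank_one_perturbation_general
    {H : Type*} [NormedAddCommGroup H] [InnerProductSpace ℂ H]
    (A : H →L[ℂ] H) (ε : ℝ) (hε : 0 < ε) (z : ℂ) (hz : z ∉ spectrum ℂ A)
    (hres : 1 / ε < ‖Ring.inverse (z • (1 : H →L[ℂ] H) - A)‖) :
    ∃ K : H →L[ℂ] H,
      Module.rank ℂ (LinearMap.range (K : H →ₗ[ℂ] H)) ≤ 1 ∧
      ‖K‖ < ε ∧
      (∃ v : H, v ≠ 0 ∧ (A + K) v = z • v) ∧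
      z ∈ spectrum ℂ (A + K) := by
  have hT : IsUnit (z • (1 : H →L[ℂ] H) - A) := by
    simpa [Algebra.algebraMap_eq_smul_one] using spectrum.notMem_iff.mp hz
  obtain ⟨v, hv_pos, hv_approx⟩ := exists_norm_apply_lt_of_inv_lt_norm_ringInverse hT hε hres
  have hv : v ≠ 0 := norm_pos_iff.mp hv_pos
  obtain ⟨K, hK_rank, hK_norm, hKv⟩ :=
    exists_rank_le_one_apply_eq (𝕜 := ℂ) ((z • (1 : H →L[ℂ] H) - A) v) hv
  have heig : (A + K) v = z • v := by simp [hKv]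
  refine ⟨K, hK_rank, ?_, ⟨v, hv, heig⟩, mem_spectrum_of_apply_eq_smul hv heig⟩
  rwa [hK_norm, div_lt_iff₀ hv_pos]

/-- Pseudospectrum inclusion via rank-one perturbations: if `z ∉ spectrum A` and
`‖(z - A)⁻¹‖ > 1/ε`, then there is a rank-one operator `K` with `‖K‖ < ε` such that
`z` is an eigenvalue of `A + K`; in particular `z ∈ spectrum (A + K)`. -/
theorem pseudospectrum_rank_one_perturbation
    {H : Type*} [NormedAddCommGroup H] [InnerProductSpace ℂ H] [CompleteSpace H]
    (A : H →L[ℂ] H) (ε : ℝ) (hε : 0 < ε) (z : ℂ) (hz : z ∉ spectrum ℂ A)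
    (hres : 1 / ε < ‖Ring.inverse (z • (1 : H →L[ℂ] H) - A)‖) :
    ∃ K : H →L[ℂ] H,
      Module.rank ℂ (LinearMap.range (K : H →ₗ[ℂ] H)) ≤ 1 ∧
      ‖K‖ < ε ∧
      (∃ v : H, v ≠ 0 ∧ (A + K) v = z • v) ∧
      z ∈ spectrum ℂ (A + K) :=
  pseudospectrum_rank_one_perturbation_general A ε hε z hz hres
end

section
/- Spectrum of the chiral block Hamiltonian: Let H₁ and H₂ be complex Hilbert spaces, D : H₁ → H₂ a bounded linear operator with Hilbert-space adjoint D†, and m ∈ ℝ. Define the bounded operator H on the Hilbert space H₁ × H₂ by H(φ₁, φ₂) := (m·φ₁ + D†φ₂, D·φ₁ − m·φ₂). Then: (i) H is self-adjoint; (ii) H ∘ H equals the block-diagonal operator (D†∘D + m²·Id) ⊕ (D∘D† + m²·Id) on H₁ × H₂; and (iii) { E² : E ∈ spectrum(H) } = { μ + m² : μ ∈ spectrum(D†∘D) ∪ spectrum(D∘D†) }. -/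
/-!
Under `WithLp 2 (H₁ × H₂) ≃ H₁ × H₂` the Hamiltonian is the block operator `[[m, D†], [D, -m]]`.
Its square is block diagonal, `(D†D + m²) ⊕ (DD† + m²)`, because the off-diagonal entries
`m D† - D† m` and `D m - m D` cancel. The spectrum of a block-diagonal operator is the union of the
spectra of its blocks, and the spectral mapping theorem `σ(H²) = σ(H)²` does the rest.
-/

open ContinuousLinearMap

section Block

variable {𝕜 E F : Type*} [NontriviallyNormedField 𝕜]
  [NormedAddCommGroup E] [NormedSpace 𝕜 E] [NormedAddCommGroup F] [NormedSpace 𝕜 F]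

theorem ContinuousLinearMap.spectrum_prodMap [CompleteSpace E] [CompleteSpace F]
    (A : E →L[𝕜] E) (B : F →L[𝕜] F) :
    spectrum 𝕜 (A.prodMap B) = spectrum 𝕜 A ∪ spectrum 𝕜 B := by
  ext μ
  have hres : algebraMap 𝕜 _ μ - A.prodMap B =
      (algebraMap 𝕜 _ μ - A).prodMap (algebraMap 𝕜 _ μ - B) := by
    ext x <;> simp [Algebra.algebraMap_eq_smul_one]
  simp only [spectrum.mem_iff, Set.mem_union, hres, isUnit_iff_bijective, coe_prodMap',
    Prod.map_bijective, not_and_or]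

noncomputable def chiralBlock (D : E →L[𝕜] F) (D' : F →L[𝕜] E) (m : 𝕜) : E × F →L[𝕜] E × F :=
  (m • fst 𝕜 E F + D' ∘L snd 𝕜 E F).prod (D ∘L fst 𝕜 E F - m • snd 𝕜 E F)

theorem chiralBlock_sq (D : E →L[𝕜] F) (D' : F →L[𝕜] E) (m : 𝕜) :
    chiralBlock D D' m ^ 2 =
      (D' ∘L D + algebraMap 𝕜 _ (m ^ 2)).prodMap (D ∘L D' + algebraMap 𝕜 _ (m ^ 2)) := by
  ext x <;> simp [chiralBlock, pow_two, Algebra.algebraMap_eq_smul_one, smul_smul, add_comm]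

theorem image_sq_spectrum_chiralBlock [IsAlgClosed 𝕜] [CompleteSpace E] [CompleteSpace F]
    (D : E →L[𝕜] F) (D' : F →L[𝕜] E) (m : 𝕜) :
    (· ^ 2) '' spectrum 𝕜 (chiralBlock D D' m) =
      (· + m ^ 2) '' (spectrum 𝕜 (D' ∘L D) ∪ spectrum 𝕜 (D ∘L D')) := by
  rw [← spectrum.map_pow_of_pos _ two_pos, chiralBlock_sq, spectrum_prodMap,
    ← spectrum.add_singleton_eq, ← spectrum.add_singleton_eq, Set.image_union,
    Set.add_singleton, Set.add_singleton]

end Block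

section Hamiltonian

variable {H₁ H₂ : Type*} [NormedAddCommGroup H₁] [InnerProductSpace ℂ H₁] [CompleteSpace H₁]
  [NormedAddCommGroup H₂] [InnerProductSpace ℂ H₂] [CompleteSpace H₂]

noncomputable def chiralHamiltonian (D : H₁ →L[ℂ] H₂) (m : ℝ) :
    WithLp 2 (H₁ × H₂) →L[ℂ] WithLp 2 (H₁ × H₂) :=
  (WithLp.prodContinuousLinearEquiv 2 ℂ H₁ H₂).symm.conjContinuousAlgEquiv
    (chiralBlock D (adjoint D) m)

theorem chiralHamiltonian_apply (D : H₁ →L[ℂ] H₂) (m : ℝ) (φ : WithLp 2 (H₁ × H₂)) :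
    chiralHamiltonian D m φ = (WithLp.equiv 2 (H₁ × H₂)).symm
        ((m : ℂ) • (WithLp.equiv 2 (H₁ × H₂) φ).1 + adjoint D (WithLp.equiv 2 (H₁ × H₂) φ).2,
         D (WithLp.equiv 2 (H₁ × H₂) φ).1 - (m : ℂ) • (WithLp.equiv 2 (H₁ × H₂) φ).2) :=
  rfl

theorem isSelfAdjoint_chiralHamiltonian (D : H₁ →L[ℂ] H₂) (m : ℝ) :
    IsSelfAdjoint (chiralHamiltonian D m) := by
  rw [isSelfAdjoint_iff_isSymmetric]
  intro x y
  simp only [coe_coe, chiralHamiltonian_apply, WithLp.prod_inner_apply,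
    WithLp.equiv_apply, WithLp.equiv_symm_apply,
    inner_add_left, inner_add_right, inner_sub_left, inner_sub_right,
    inner_smul_left, inner_smul_right, adjoint_inner_left, adjoint_inner_right,
    Complex.conj_ofReal]
  ring

theorem chiralHamiltonian_sq (D : H₁ →L[ℂ] H₂) (m : ℝ) :
    chiralHamiltonian D m ^ 2 =
      (WithLp.prodContinuousLinearEquiv 2 ℂ H₁ H₂).symm.conjContinuousAlgEquiv
        ((adjoint D ∘L D + algebraMap ℂ _ ((m : ℂ) ^ 2)).prodMap
          (D ∘L adjoint D + algebraMap ℂ _ ((m : ℂ) ^ 2))) := by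
  rw [chiralHamiltonian, ← map_pow, chiralBlock_sq]

theorem spectrum_chiralHamiltonian (D : H₁ →L[ℂ] H₂) (m : ℝ) :
    spectrum ℂ (chiralHamiltonian D m) = spectrum ℂ (chiralBlock D (adjoint D) m) :=
  AlgEquiv.spectrum_eq _ _

end Hamiltonian

/-- Spectrum of the chiral block Hamiltonian `H(φ₁, φ₂) = (m φ₁ + D† φ₂, D φ₁ - m φ₂)`
on the Hilbert space product `H₁ × H₂`: it is self-adjoint, its square is the
block-diagonal operator `(D†D + m²) ⊕ (DD† + m²)`, and the set of squares of its
spectrum equals `spectrum (D†D) ∪ spectrum (DD†)` shifted by `m²`. -/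
theorem chiral_block_hamiltonian_spectrum
    {H₁ H₂ : Type*} [NormedAddCommGroup H₁] [InnerProductSpace ℂ H₁] [CompleteSpace H₁]
    [NormedAddCommGroup H₂] [InnerProductSpace ℂ H₂] [CompleteSpace H₂]
    (D : H₁ →L[ℂ] H₂) (m : ℝ)
    (Hop : WithLp 2 (H₁ × H₂) →L[ℂ] WithLp 2 (H₁ × H₂))
    (hHop : ∀ φ : WithLp 2 (H₁ × H₂),
      Hop φ = (WithLp.equiv 2 (H₁ × H₂)).symm
        ((m : ℂ) • (WithLp.equiv 2 (H₁ × H₂) φ).1 + adjoint D (WithLp.equiv 2 (H₁ × H₂) φ).2,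
         D (WithLp.equiv 2 (H₁ × H₂) φ).1 - (m : ℂ) • (WithLp.equiv 2 (H₁ × H₂) φ).2)) :
    IsSelfAdjoint Hop ∧
    (∀ φ : WithLp 2 (H₁ × H₂),
      Hop (Hop φ) = (WithLp.equiv 2 (H₁ × H₂)).symm
        (adjoint D (D (WithLp.equiv 2 (H₁ × H₂) φ).1)
            + ((m : ℂ) ^ 2) • (WithLp.equiv 2 (H₁ × H₂) φ).1,
         D (adjoint D (WithLp.equiv 2 (H₁ × H₂) φ).2)
            + ((m : ℂ) ^ 2) • (WithLp.equiv 2 (H₁ × H₂) φ).2)) ∧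
    (fun E : ℂ => E ^ 2) '' spectrum ℂ Hop =
      (fun μ : ℂ => μ + (m : ℂ) ^ 2) ''
        (spectrum ℂ ((adjoint D).comp D) ∪ spectrum ℂ (D.comp (adjoint D))) := by
  obtain rfl : Hop = chiralHamiltonian D m := ext hHop
  refine ⟨isSelfAdjoint_chiralHamiltonian D m, fun φ => ?_, ?_⟩
  · change (chiralHamiltonian D m ^ 2) φ = _
    rw [chiralHamiltonian_sq]
    simp [Algebra.algebraMap_eq_smul_one, Prod.map, WithLp.ofLp_fst, WithLp.ofLp_snd]
  · rw [spectrum_chiralHamiltonian]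
    exact image_sq_spectrum_chiralBlock D (adjoint D) (m : ℂ)
end

section
/- Two-component estimate for ranges of nearby projections (equation eq:continity in the proof of Proposition 1.10): Let H be a complex Hilbert space with an orthogonal decomposition given by two complementary orthogonal projections π₁ and π₂ (π₁ + π₂ = Id, π₁π₂ = 0, both self-adjoint idempotents). Let P be an orthogonal projection on H whose range is contained in the range of π₁ (equivalently π₂ P = 0), and let Q be a bounded operator with ‖Q − P‖ ≤ c for some 0 ≤ c < 1. Then every φ ∈ H with Qφ = φ satisfies ‖π₂ φ‖ ≤ ( √(c(2 − c)) / (1 − c) ) · ‖π₁ φ‖. -/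
/-!
Since `π₂ P = 0` and `Q φ = φ`, we have `π₂ φ = π₂ (Q - P) φ`, so `‖π₂ φ‖ ≤ c ‖φ‖` because `π₂` is
a contraction. With Pythagoras `‖φ‖² = ‖π₁ φ‖² + ‖π₂ φ‖²` this gives
`(1 - c²) ‖π₂ φ‖² ≤ c² ‖π₁ φ‖²`, which is stronger than the claimed bound.
-/

open scoped InnerProductSpace

namespace ContinuousLinearMap

variable {𝕜 E : Type*} [RCLike 𝕜] [NormedAddCommGroup E] [InnerProductSpace 𝕜 E]
  [CompleteSpace E] {A B : E →L[𝕜] E}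

theorem inner_apply_apply_eq_zero_of_mul_eq_zero (hA : IsSelfAdjoint A) (hAB : A * B = 0)
    (x y : E) : ⟪A x, B y⟫_𝕜 = 0 :=
  calc ⟪A x, B y⟫_𝕜 = ⟪x, (A * B) y⟫_𝕜 := hA.isSymmetric x (B y)
    _ = 0 := by rw [hAB, zero_apply, inner_zero_right]

theorem norm_sq_eq_norm_sq_add_norm_sq_of_add_eq_one (hA : IsSelfAdjoint A) (hsum : A + B = 1)
    (hAB : A * B = 0) (x : E) : ‖x‖ ^ 2 = ‖A x‖ ^ 2 + ‖B x‖ ^ 2 := by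
  have hx : A x + B x = x := by simpa using congr($hsum x)
  simpa only [hx, sq] using norm_add_sq_eq_norm_sq_add_norm_sq_of_inner_eq_zero _ _
    (inner_apply_apply_eq_zero_of_mul_eq_zero hA hAB x x)

theorem opNorm_le_one_of_add_eq_one (hA : IsSelfAdjoint A) (hsum : A + B = 1)
    (hAB : A * B = 0) : ‖B‖ ≤ 1 :=
  B.opNorm_le_bound zero_le_one fun x ↦ by
    refine le_of_pow_le_pow_left₀ two_ne_zero (by positivity) ?_
    rw [one_mul, norm_sq_eq_norm_sq_add_norm_sq_of_add_eq_one hA hsum hAB x]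
    exact le_add_of_nonneg_left (sq_nonneg _)

end ContinuousLinearMap

theorem ContinuousLinearMap.norm_apply_le_of_mul_eq_zero_of_apply_eq_self
    {𝕜 E : Type*} [NontriviallyNormedField 𝕜] [SeminormedAddCommGroup E] [NormedSpace 𝕜 E]
    {B P Q : E →L[𝕜] E} (hBP : B * P = 0) {φ : E} (hφ : Q φ = φ) :
    ‖B φ‖ ≤ ‖B‖ * ‖Q - P‖ * ‖φ‖ := by
  have hBφ : B φ = (B * (Q - P)) φ := by
    rw [mul_sub, hBP, sub_zero]
    exact congrArg B hφ.symm
  rw [hBφ]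
  exact ((B * (Q - P)).le_opNorm φ).trans (by gcongr; exact opNorm_comp_le B (Q - P))

theorem Real.le_sqrt_mul_two_sub_div_one_sub_mul_of_sq_le {a b c : ℝ} (ha : 0 ≤ a) (hb : 0 ≤ b)
    (hc0 : 0 ≤ c) (hc1 : c < 1) (h : a ^ 2 ≤ c ^ 2 * (a ^ 2 + b ^ 2)) :
    a ≤ √(c * (2 - c)) / (1 - c) * b := by
  have hc' : 0 < 1 - c := sub_pos.2 hc1
  rw [div_mul_eq_mul_div, le_div_iff₀ hc', ← Real.sqrt_sq hb, ← Real.sqrt_mul' _ (sq_nonneg b),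
    Real.le_sqrt (mul_nonneg ha hc'.le) (mul_nonneg (mul_nonneg hc0 (by linarith)) (sq_nonneg b))]
  -- multiplying the claim by `1 + c` exposes it as a sum of nonnegative terms
  have key : (1 + c) * (c * (2 - c) * b ^ 2 - (a * (1 - c)) ^ 2)
      = (1 - c) * (c ^ 2 * (a ^ 2 + b ^ 2) - a ^ 2) + 2 * c * b ^ 2 := by ring
  have hscaled : 0 ≤ (1 + c) * (c * (2 - c) * b ^ 2 - (a * (1 - c)) ^ 2) := by
    rw [key]
    have := mul_nonneg hc'.le (sub_nonneg.2 h)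
    positivity
  linarith [nonneg_of_mul_nonneg_right hscaled (by linarith)]

theorem two_component_estimate_nearby_projections_general
    {H : Type*} [NormedAddCommGroup H] [InnerProductSpace ℂ H] [CompleteSpace H]
    (π₁ π₂ P Q : H →L[ℂ] H)
    (hπ₁sa : IsSelfAdjoint π₁)
    (hsum : π₁ + π₂ = 1) (hprod : π₁ * π₂ = 0)
    (hran : π₂ * P = 0)
    (c : ℝ) (hc0 : 0 ≤ c) (hc1 : c < 1) (hQP : ‖Q - P‖ ≤ c)
    (φ : H) (hφ : Q φ = φ) :
    ‖π₂ φ‖ ≤ (Real.sqrt (c * (2 - c)) / (1 - c)) * ‖π₁ φ‖ := by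
  have hpyth := π₁.norm_sq_eq_norm_sq_add_norm_sq_of_add_eq_one hπ₁sa hsum hprod φ
  have hsmall : ‖π₂ φ‖ ≤ c * ‖φ‖ :=
    calc ‖π₂ φ‖ ≤ ‖π₂‖ * ‖Q - P‖ * ‖φ‖ :=
          π₂.norm_apply_le_of_mul_eq_zero_of_apply_eq_self hran hφ
      _ ≤ 1 * c * ‖φ‖ := by
          gcongr
          exact ContinuousLinearMap.opNorm_le_one_of_add_eq_one hπ₁sa hsum hprod
      _ = c * ‖φ‖ := by rw [one_mul]
  refine Real.le_sqrt_mul_two_sub_div_one_sub_mul_of_sq_le (norm_nonneg _) (norm_nonneg _)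
    hc0 hc1 ?_
  calc ‖π₂ φ‖ ^ 2 ≤ (c * ‖φ‖) ^ 2 := pow_le_pow_left₀ (norm_nonneg _) hsmall 2
    _ = c ^ 2 * (‖π₂ φ‖ ^ 2 + ‖π₁ φ‖ ^ 2) := by rw [mul_pow, hpyth, add_comm]

/-- Two-component estimate for ranges of nearby projections (eq:continity in the proof
of Proposition 1.10): if `π₁, π₂` are complementary orthogonal projections, `P` is an
orthogonal projection with range in the range of `π₁` (i.e. `π₂ P = 0`), and `Q` is a
bounded operator with `‖Q - P‖ ≤ c < 1`, then every `φ` with `Q φ = φ` satisfies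
`‖π₂ φ‖ ≤ (√(c(2 - c)) / (1 - c)) ‖π₁ φ‖`. -/
theorem two_component_estimate_nearby_projections
    {H : Type*} [NormedAddCommGroup H] [InnerProductSpace ℂ H] [CompleteSpace H]
    (π₁ π₂ P Q : H →L[ℂ] H)
    (hπ₁sa : IsSelfAdjoint π₁) (hπ₂sa : IsSelfAdjoint π₂)
    (hπ₁idem : IsIdempotentElem π₁) (hπ₂idem : IsIdempotentElem π₂)
    (hsum : π₁ + π₂ = 1) (hprod : π₁ * π₂ = 0)
    (hPsa : IsSelfAdjoint P) (hPidem : IsIdempotentElem P)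
    (hran : π₂ * P = 0)
    (c : ℝ) (hc0 : 0 ≤ c) (hc1 : c < 1) (hQP : ‖Q - P‖ ≤ c)
    (φ : H) (hφ : Q φ = φ) :
    ‖π₂ φ‖ ≤ (Real.sqrt (c * (2 - c)) / (1 - c)) * ‖π₁ φ‖ :=
  two_component_estimate_nearby_projections_general π₁ π₂ P Q hπ₁sa hsum hprod hran c hc0 hc1 hQP φ
    hφ
end

section
/- Norm bound for the difference of Riesz projections: Let X be a complex Banach space, A and B bounded linear operators on X, z₀ ∈ ℂ and R > 0 such that every z ∈ ℂ with |z − z₀| = R lies outside the spectra of both A and B, and suppose ‖(z − A)⁻¹‖ ≤ M_A and ‖(z − B)⁻¹‖ ≤ M_B for all such z. Define the Riesz projections P_A := (2πi)⁻¹ ∮_{|z−z₀|=R} (z − A)⁻¹ dz and P_B := (2πi)⁻¹ ∮_{|z−z₀|=R} (z − B)⁻¹ dz. Then ‖P_A − P_B‖ ≤ R · M_A · M_B · ‖A − B‖. -/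
open Metric spectrum

noncomputable def rieszProjection {𝒜 : Type*} [NormedRing 𝒜] [NormedAlgebra ℂ 𝒜]
    (a : 𝒜) (c : ℂ) (R : ℝ) : 𝒜 :=
  (2 * Real.pi * Complex.I)⁻¹ • ∮ z in C(c, R), resolvent a z

theorem norm_resolvent_sub_resolvent_le {R 𝒜 : Type*} [CommSemiring R] [NormedRing 𝒜]
    [Algebra R 𝒜] {a b : 𝒜} {r : R} {Ma Mb : ℝ}
    (ha : r ∈ resolventSet R a) (hb : r ∈ resolventSet R b)
    (hMa : ‖resolvent a r‖ ≤ Ma) (hMb : ‖resolvent b r‖ ≤ Mb) :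
    ‖resolvent a r - resolvent b r‖ ≤ Ma * Mb * ‖a - b‖ :=
  calc ‖resolvent a r - resolvent b r‖
      = ‖resolvent a r * (a - b) * resolvent b r‖ := by rw [resolvent_sub_resolvent ha hb]
    _ ≤ ‖resolvent a r‖ * ‖a - b‖ * ‖resolvent b r‖ := norm_mul₃_le
    _ ≤ Ma * ‖a - b‖ * Mb := by
      have : 0 ≤ Ma := (norm_nonneg _).trans hMa
      gcongr
    _ = Ma * Mb * ‖a - b‖ := by ring

section CircleIntegral

variable {𝒜 : Type*} [NormedRing 𝒜] [NormedAlgebra ℂ 𝒜] [CompleteSpace 𝒜]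

theorem circleIntegrable_resolvent {a : 𝒜} {c : ℂ} {R : ℝ} (hR : 0 ≤ R)
    (ha : sphere c R ⊆ resolventSet ℂ a) : CircleIntegrable (resolvent a) c R :=
  ContinuousOn.circleIntegrable hR fun _ hz ↦
    (hasDerivAt_resolvent_const_left (ha hz)).continuousAt.continuousWithinAt

theorem norm_rieszProjection_sub_le {a b : 𝒜} {c : ℂ} {R Ma Mb : ℝ} (hR : 0 ≤ R)
    (ha : sphere c R ⊆ resolventSet ℂ a) (hb : sphere c R ⊆ resolventSet ℂ b)
    (hMa : ∀ z ∈ sphere c R, ‖resolvent a z‖ ≤ Ma)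
    (hMb : ∀ z ∈ sphere c R, ‖resolvent b z‖ ≤ Mb) :
    ‖rieszProjection a c R - rieszProjection b c R‖ ≤ R * Ma * Mb * ‖a - b‖ := by
  rw [rieszProjection, rieszProjection, ← smul_sub, ← circleIntegral.integral_sub
    (circleIntegrable_resolvent hR ha) (circleIntegrable_resolvent hR hb)]
  refine (circleIntegral.norm_two_pi_i_inv_smul_integral_le_of_norm_le_const hR fun z hz ↦
    norm_resolvent_sub_resolvent_le (ha hz) (hb hz) (hMa z hz) (hMb z hz)).trans_eq ?_
  ring

end CircleIntegral

/-- Norm bound for the difference of Riesz projections: if the circle `|z - z₀| = R`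
lies in the resolvent sets of `A` and `B` with resolvent norm bounds `M_A`, `M_B`,
then the Riesz projections `P_A, P_B` obtained by integrating the resolvents over
this circle satisfy `‖P_A - P_B‖ ≤ R · M_A · M_B · ‖A - B‖`. -/
theorem riesz_projection_difference_bound
    {X : Type*} [NormedAddCommGroup X] [NormedSpace ℂ X] [CompleteSpace X]
    (A B : X →L[ℂ] X) (z₀ : ℂ) (R MA MB : ℝ) (hR : 0 < R)
    (hAspec : ∀ z : ℂ, ‖z - z₀‖ = R → z ∉ spectrum ℂ A)
    (hBspec : ∀ z : ℂ, ‖z - z₀‖ = R → z ∉ spectrum ℂ B)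
    (hMA : ∀ z : ℂ, ‖z - z₀‖ = R → ‖Ring.inverse (z • (1 : X →L[ℂ] X) - A)‖ ≤ MA)
    (hMB : ∀ z : ℂ, ‖z - z₀‖ = R → ‖Ring.inverse (z • (1 : X →L[ℂ] X) - B)‖ ≤ MB) :
    ‖(2 * Real.pi * Complex.I)⁻¹ •
        (∮ z in C(z₀, R), Ring.inverse (z • (1 : X →L[ℂ] X) - A)) -
      (2 * Real.pi * Complex.I)⁻¹ •
        (∮ z in C(z₀, R), Ring.inverse (z • (1 : X →L[ℂ] X) - B))‖ ≤
      R * MA * MB * ‖A - B‖ := by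
  have inverse_eq_resolvent (T : X →L[ℂ] X) (z : ℂ) :
      Ring.inverse (z • (1 : X →L[ℂ] X) - T) = resolvent T z := by
    rw [resolvent, Algebra.algebraMap_eq_smul_one]
  simp only [inverse_eq_resolvent] at hMA hMB ⊢
  exact norm_rieszProjection_sub_le hR.le
    (fun z hz ↦ not_not.mp (hAspec z (mem_sphere_iff_norm.mp hz)))
    (fun z hz ↦ not_not.mp (hBspec z (mem_sphere_iff_norm.mp hz)))
    (fun z hz ↦ hMA z (mem_sphere_iff_norm.mp hz))
    (fun z hz ↦ hMB z (mem_sphere_iff_norm.mp hz))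
end
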